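/- The set of singular points of the projective variety 𝒳 ⊂ ℙ⁵(ℂ) defined by f = X₀X₁X₂ − X₃X₄X₅ = 0 and g = X₀³ + X₁³ + X₂³ − X₃³ − X₄³ − X₅³ = 0 — that is, the set of points [v] ∈ ℙ⁵(ℂ) with f(v) = g(v) = 0 such that the gradient vectors ∇f(v) and ∇g(v) in ℂ⁶ are linearly dependent — is a finite set of cardinality exactly 108. -/

import Mathlib

/-!
The gradients are dependent iff either `∇f(v) = 0` or `∇g(v) = t ∇f(v)` for some `t`.

If `∇f(v) = 0`, each of the blocks `(v₀, v₁, v₂)` and `(v₃, v₄, v₅)` has at most one nonzero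
entry, and `g(v) = 0` makes their cubes equal: these are the `3 · 3 · 3 = 27` points
`[eᵢ + ω e₃₊ⱼ]` with `ω³ = 1`.

If `∇g(v) = t ∇f(v)`, multiplying the `k`-th coordinate by `v_k` and using `f(v) = 0` gives
`3 v_k³ = t v₀v₁v₂` for every `k`. So all `v_k³` are equal and nonzero, and
`[v] = [1 : α : β : γ : δ : αβ/(γδ)]` with `α, β, γ, δ` cube roots of unity: `81` points.

These `108` representatives give distinct points: proportional vectors have the same zero pattern,
and they are equal as soon as both have the entry `1` at the same coordinate.
-/

open MvPolynomial

/-- The cubic `f = X₀X₁X₂ − X₃X₄X₅` in `ℂ[X₀,…,X₅]`. -/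
noncomputable def cubicF : MvPolynomial (Fin 6) ℂ :=
  X 0 * X 1 * X 2 - X 3 * X 4 * X 5

/-- The cubic `g = X₀³ + X₁³ + X₂³ − X₃³ − X₄³ − X₅³` in `ℂ[X₀,…,X₅]`. -/
noncomputable def cubicG : MvPolynomial (Fin 6) ℂ :=
  X 0 ^ 3 + X 1 ^ 3 + X 2 ^ 3 - X 3 ^ 3 - X 4 ^ 3 - X 5 ^ 3

/-- The gradient `∇p(v) ∈ ℂ⁶` of a polynomial `p ∈ ℂ[X₀,…,X₅]` at a point `v ∈ ℂ⁶`. -/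
noncomputable def gradientAt (p : MvPolynomial (Fin 6) ℂ) (v : Fin 6 → ℂ) : Fin 6 → ℂ :=
  fun i => eval v (pderiv i p)

/-- The set of singular points of the projective variety `𝒳 ⊂ ℙ⁵(ℂ)` cut out by
`f = 0` and `g = 0`: points `[v]` with `f(v) = g(v) = 0` at which the gradients
`∇f(v)` and `∇g(v)` are linearly dependent.  (Since `f` and `g` are homogeneous,
these conditions do not depend on the representative `v ≠ 0`, so we may evaluate
them at the canonical representative `x.rep`.) -/
noncomputable def singularLocus : Set (Projectivization ℂ (Fin 6 → ℂ)) :=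
  {x | eval x.rep cubicF = 0 ∧ eval x.rep cubicG = 0 ∧
    ¬ LinearIndependent ℂ ![gradientAt cubicF x.rep, gradientAt cubicG x.rep]}

lemma eval_cubicF (v : Fin 6 → ℂ) : eval v cubicF = v 0 * v 1 * v 2 - v 3 * v 4 * v 5 := by
  simp [cubicF]

lemma eval_cubicG (v : Fin 6 → ℂ) :
    eval v cubicG = v 0 ^ 3 + v 1 ^ 3 + v 2 ^ 3 - v 3 ^ 3 - v 4 ^ 3 - v 5 ^ 3 := by
  simp [cubicG]

lemma gradientAt_cubicF (v : Fin 6 → ℂ) : gradientAt cubicF v =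
    ![v 1 * v 2, v 0 * v 2, v 0 * v 1, -(v 4 * v 5), -(v 3 * v 5), -(v 3 * v 4)] := by
  ext k; fin_cases k <;> simp [gradientAt, cubicF] <;> ring

lemma gradientAt_cubicG (v : Fin 6 → ℂ) : gradientAt cubicG v =
    ![3 * v 0 ^ 2, 3 * v 1 ^ 2, 3 * v 2 ^ 2, -(3 * v 3 ^ 2), -(3 * v 4 ^ 2), -(3 * v 5 ^ 2)] := by
  ext k; fin_cases k <;> simp [gradientAt, cubicG]

lemma not_linearIndependent_pair_iff {K V : Type*} [Field K] [AddCommGroup V] [Module K V]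
    {x y : V} : ¬ LinearIndependent K ![x, y] ↔ x = 0 ∨ ∃ a : K, a • x = y := by
  by_cases hx : x = 0
  · simpa [hx] using fun h => h.ne_zero 0 rfl
  · simp [hx, LinearIndependent.pair_iff' hx]

lemma exists_eq_pi_single_of_pairwise_mul_eq_zero {ι M₀ : Type*} [DecidableEq ι] [Nonempty ι]
    [MulZeroClass M₀] [NoZeroDivisors M₀] {u : ι → M₀}
    (h : Pairwise fun k l => u k * u l = 0) : ∃ i, u = Pi.single i (u i) := by
  by_cases hu : u = 0
  · exact ⟨Classical.arbitrary ι, by simp [hu]⟩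
  obtain ⟨i, hi⟩ := Function.ne_iff.1 hu
  refine ⟨i, funext fun k => ?_⟩
  by_cases hk : k = i
  · simp [hk]
  · simpa [hk] using (mul_eq_zero.1 (h hk)).resolve_right hi

namespace Projectivization

variable {K ι : Type*} [Field K]

lemma apply_eq_zero_iff_of_mk_eq_mk {v w : ι → K} {hv : v ≠ 0} {hw : w ≠ 0}
    (h : mk K v hv = mk K w hw) (k : ι) : v k = 0 ↔ w k = 0 := by
  obtain ⟨a, rfl⟩ := (mk_eq_mk_iff K _ _ hv hw).1 h
  simp [Units.smul_def]

lemma eq_of_mk_eq_mk_of_apply_eq_one {v w : ι → K} {hv : v ≠ 0} {hw : w ≠ 0}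
    (h : mk K v hv = mk K w hw) {k : ι} (hvk : v k = 1) (hwk : w k = 1) : v = w := by
  obtain ⟨a, rfl⟩ := (mk_eq_mk_iff' K _ _ hv hw).1 h
  obtain rfl : a = 1 := by simpa [hwk] using hvk
  exact one_smul K w

end Projectivization

def IsSingularVector (v : Fin 6 → ℂ) : Prop :=
  eval v cubicF = 0 ∧ eval v cubicG = 0 ∧
    ¬ LinearIndependent ℂ ![gradientAt cubicF v, gradientAt cubicG v]

lemma isSingularVector_iff (v : Fin 6 → ℂ) : IsSingularVector v ↔
    eval v cubicF = 0 ∧ eval v cubicG = 0 ∧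
      (gradientAt cubicF v = 0 ∨ ∃ t : ℂ, t • gradientAt cubicF v = gradientAt cubicG v) := by
  rw [IsSingularVector, not_linearIndependent_pair_iff]

lemma isSingularVector_smul_iff {c : ℂ} (hc : c ≠ 0) (v : Fin 6 → ℂ) :
    IsSingularVector (c • v) ↔ IsSingularVector v := by
  have hF : eval (c • v) cubicF = c ^ 3 * eval v cubicF := by
    simp only [eval_cubicF, Pi.smul_apply, smul_eq_mul]; ring
  have hG : eval (c • v) cubicG = c ^ 3 * eval v cubicG := by
    simp only [eval_cubicG, Pi.smul_apply, smul_eq_mul]; ring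
  have hgradF : gradientAt cubicF (c • v) = c ^ 2 • gradientAt cubicF v := by
    rw [gradientAt_cubicF, gradientAt_cubicF]; ext k; fin_cases k <;> simp <;> ring
  have hgradG : gradientAt cubicG (c • v) = c ^ 2 • gradientAt cubicG v := by
    rw [gradientAt_cubicG, gradientAt_cubicG]; ext k; fin_cases k <;> simp <;> ring
  have hc2 : IsUnit (c ^ 2) := (pow_ne_zero 2 hc).isUnit
  simp only [IsSingularVector, hF, hG, hgradF, hgradG, LinearIndependent.pair_smul_smul_iff hc2 hc2,
    mul_eq_zero, pow_ne_zero 3 hc, false_or]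

lemma mk_mem_singularLocus_iff {v : Fin 6 → ℂ} (hv : v ≠ 0) :
    Projectivization.mk ℂ v hv ∈ singularLocus ↔ IsSingularVector v := by
  obtain ⟨a, ha⟩ := Projectivization.exists_smul_eq_mk_rep ℂ v hv
  change IsSingularVector _ ↔ _
  rw [← ha, Units.smul_def, isSingularVector_smul_iff a.ne_zero]

lemma fin_append_three_eq {α : Type*} (x y : Fin 3 → α) :
    (Fin.append x y : Fin 6 → α) = ![x 0, x 1, x 2, y 0, y 1, y 2] := by
  ext k; fin_cases k <;> rfl

def pairSingle (i j : Fin 3) (x y : ℂ) : Fin 6 → ℂ := Fin.append (Pi.single i x) (Pi.single j y)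

lemma pairSingle_ne_zero (i j : Fin 3) {x : ℂ} (hx : x ≠ 0) (y : ℂ) : pairSingle i j x y ≠ 0 :=
  fun h => hx (by simpa [pairSingle] using congrFun h (Fin.castAdd 3 i))

lemma pairSingle_zero (i j : Fin 3) : pairSingle i j 0 0 = 0 := by
  simp [pairSingle, fin_append_three_eq]

lemma smul_pairSingle (c : ℂ) (i j : Fin 3) (x y : ℂ) :
    c • pairSingle i j x y = pairSingle i j (c * x) (c * y) := by
  simp only [pairSingle, fin_append_three_eq]
  ext k; fin_cases k <;> simp [Pi.single_apply]

lemma eval_cubicF_pairSingle (i j : Fin 3) (x y : ℂ) : eval (pairSingle i j x y) cubicF = 0 := by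
  fin_cases i <;> fin_cases j <;> simp [pairSingle, eval_cubicF, fin_append_three_eq]

lemma eval_cubicG_pairSingle (i j : Fin 3) (x y : ℂ) :
    eval (pairSingle i j x y) cubicG = x ^ 3 - y ^ 3 := by
  fin_cases i <;> fin_cases j <;> simp [pairSingle, eval_cubicG, fin_append_three_eq]

lemma gradientAt_cubicF_pairSingle (i j : Fin 3) (x y : ℂ) :
    gradientAt cubicF (pairSingle i j x y) = 0 := by
  rw [gradientAt_cubicF]
  fin_cases i <;> fin_cases j <;> simp [pairSingle, fin_append_three_eq]

lemma isSingularVector_pairSingle (i j : Fin 3) {x y : ℂ} (h : x ^ 3 = y ^ 3) :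
    IsSingularVector (pairSingle i j x y) :=
  (isSingularVector_iff _).2 ⟨eval_cubicF_pairSingle i j x y,
    by rw [eval_cubicG_pairSingle, h, sub_self], .inl (gradientAt_cubicF_pairSingle i j x y)⟩

lemma exists_smul_pairSingle_eq {v : Fin 6 → ℂ} (hv : v ≠ 0)
    (hgrad : gradientAt cubicF v = 0) (hg : eval v cubicG = 0) :
    ∃ i j : Fin 3, ∃ ω : ℂ, ω ^ 3 = 1 ∧ ∃ c : ℂ, c • pairSingle i j 1 ω = v := by
  simp only [gradientAt_cubicF, funext_iff, Fin.forall_fin_succ] at hgrad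
  have hx : Pairwise fun k l => ![v 0, v 1, v 2] k * ![v 0, v 1, v 2] l = 0 := by
    intro k l hkl; fin_cases k <;> fin_cases l <;> simp_all [mul_comm]
  have hy : Pairwise fun k l => ![v 3, v 4, v 5] k * ![v 3, v 4, v 5] l = 0 := by
    intro k l hkl; fin_cases k <;> fin_cases l <;> simp_all [mul_comm]
  obtain ⟨i, hi⟩ := exists_eq_pi_single_of_pairwise_mul_eq_zero hx
  obtain ⟨j, hj⟩ := exists_eq_pi_single_of_pairwise_mul_eq_zero hy
  set a := ![v 0, v 1, v 2] i
  set b := ![v 3, v 4, v 5] j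
  have hv_eq : v = pairSingle i j a b := by
    rw [pairSingle, ← hi, ← hj, fin_append_three_eq]; ext k; fin_cases k <;> rfl
  rw [hv_eq, eval_cubicG_pairSingle, sub_eq_zero] at hg
  have ha : a ≠ 0 := by
    rintro ha
    rw [ha, zero_pow three_ne_zero, eq_comm, pow_eq_zero_iff three_ne_zero] at hg
    exact hv (by rw [hv_eq, ha, hg, pairSingle_zero])
  refine ⟨i, j, b / a, by rw [div_pow, ← hg, div_self (pow_ne_zero 3 ha)], a, ?_⟩
  rw [smul_pairSingle, mul_one, mul_div_cancel₀ _ ha, hv_eq]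

noncomputable def ratioVec (α β γ δ : ℂ) : Fin 6 → ℂ := ![1, α, β, γ, δ, α * β / (γ * δ)]

lemma ratioVec_ne_zero (α β γ δ : ℂ) : ratioVec α β γ δ ≠ 0 :=
  fun h => one_ne_zero (congrFun h 0)

lemma ratioVec_apply_ne_zero {α β γ δ : ℂ} (hα : α ≠ 0) (hβ : β ≠ 0) (hγ : γ ≠ 0) (hδ : δ ≠ 0)
    (k : Fin 6) : ratioVec α β γ δ k ≠ 0 := by
  fin_cases k <;> simp [ratioVec, *]

lemma isSingularVector_ratioVec {α β γ δ : ℂ} (hα : α ^ 3 = 1) (hβ : β ^ 3 = 1)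
    (hγ : γ ^ 3 = 1) (hδ : δ ^ 3 = 1) : IsSingularVector (ratioVec α β γ δ) := by
  have hα₀ := (IsUnit.of_pow_eq_one hα three_ne_zero).ne_zero
  have hβ₀ := (IsUnit.of_pow_eq_one hβ three_ne_zero).ne_zero
  have hγ₀ := (IsUnit.of_pow_eq_one hγ three_ne_zero).ne_zero
  have hδ₀ := (IsUnit.of_pow_eq_one hδ three_ne_zero).ne_zero
  refine (isSingularVector_iff _).2 ⟨?_, ?_, .inr ⟨3 / (α * β), ?_⟩⟩
  · simp [eval_cubicF, ratioVec, mul_div_cancel₀ _ (mul_ne_zero hγ₀ hδ₀)]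
  · simp [eval_cubicG, ratioVec, div_pow, mul_pow, hα, hβ, hγ, hδ]
  · rw [gradientAt_cubicF, gradientAt_cubicG]
    ext k; fin_cases k <;> simp [ratioVec] <;> field_simp <;> simp [*]

lemma exists_smul_ratioVec_eq {v : Fin 6 → ℂ} (hv : v ≠ 0) (hf : eval v cubicF = 0) {t : ℂ}
    (ht : t • gradientAt cubicF v = gradientAt cubicG v) :
    ∃ α β γ δ : ℂ, α ^ 3 = 1 ∧ β ^ 3 = 1 ∧ γ ^ 3 = 1 ∧ δ ^ 3 = 1 ∧
      ∃ c : ℂ, c • ratioVec α β γ δ = v := by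
  rw [eval_cubicF] at hf
  obtain ⟨h0, h1, h2, h3, h4, h5⟩ :
      t * (v 1 * v 2) = 3 * v 0 ^ 2 ∧ t * (v 0 * v 2) = 3 * v 1 ^ 2 ∧
      t * (v 0 * v 1) = 3 * v 2 ^ 2 ∧ t * (v 4 * v 5) = 3 * v 3 ^ 2 ∧
      t * (v 3 * v 5) = 3 * v 4 ^ 2 ∧ t * (v 3 * v 4) = 3 * v 5 ^ 2 := by
    simpa [gradientAt_cubicF, gradientAt_cubicG, funext_iff, Fin.forall_fin_succ] using ht
  have hcube : ∀ k, v k ^ 3 = v 0 ^ 3 := by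
    intro k
    fin_cases k <;> simp only [Fin.reduceFinMk]
    · linear_combination (v 0 * h0 - v 1 * h1) / 3
    · linear_combination (v 0 * h0 - v 2 * h2) / 3
    · linear_combination (v 0 * h0 - v 3 * h3 - t * hf) / 3
    · linear_combination (v 0 * h0 - v 4 * h4 - t * hf) / 3
    · linear_combination (v 0 * h0 - v 5 * h5 - t * hf) / 3
  have hv0 : v 0 ≠ 0 := fun h => hv <| funext fun k =>
    (pow_eq_zero_iff three_ne_zero).1 (by rw [hcube k, h, zero_pow three_ne_zero])
  have hvk : ∀ k, v k ≠ 0 := fun k h => hv0 <|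
    (pow_eq_zero_iff three_ne_zero).1 (by rw [← hcube k, h, zero_pow three_ne_zero])
  have hroot : ∀ k, (v k / v 0) ^ 3 = 1 := fun k => by
    rw [div_pow, hcube, div_self (pow_ne_zero 3 hv0)]
  refine ⟨_, _, _, _, hroot 1, hroot 2, hroot 3, hroot 4, v 0, ?_⟩
  have hv3 := hvk 3
  have hv4 := hvk 4
  ext k; fin_cases k <;> simp [ratioVec] <;> field_simp
  linear_combination hf

abbrev CubeRoot : Type := {ζ : ℂ // ζ ∈ Polynomial.nthRootsFinset 3 (1 : ℂ)}

lemma CubeRoot.pow_three (ζ : CubeRoot) : (ζ : ℂ) ^ 3 = 1 :=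
  (Polynomial.mem_nthRootsFinset three_pos 1).1 ζ.2

lemma CubeRoot.ne_zero (ζ : CubeRoot) : (ζ : ℂ) ≠ 0 :=
  (IsUnit.of_pow_eq_one ζ.pow_three three_ne_zero).ne_zero

def CubeRoot.mk (ζ : ℂ) (h : ζ ^ 3 = 1) : CubeRoot :=
  ⟨ζ, (Polynomial.mem_nthRootsFinset three_pos 1).2 h⟩

lemma card_nthRootsFinset_three_one : (Polynomial.nthRootsFinset 3 (1 : ℂ)).card = 3 :=
  (Complex.isPrimitiveRoot_exp 3 three_ne_zero).card_nthRootsFinset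

open Projectivization in
noncomputable def singularPoint :
    Fin 3 × Fin 3 × CubeRoot ⊕ CubeRoot × CubeRoot × CubeRoot × CubeRoot →
      Projectivization ℂ (Fin 6 → ℂ) :=
  Sum.elim (fun ⟨i, j, ω⟩ => mk ℂ (pairSingle i j 1 ω) (pairSingle_ne_zero i j one_ne_zero ω))
    (fun ⟨α, β, γ, δ⟩ => mk ℂ (ratioVec α β γ δ) (ratioVec_ne_zero α β γ δ))

lemma singularPoint_injective : Function.Injective singularPoint := by
  refine Function.Injective.sumElim ?_ ?_ ?_
  · rintro ⟨i, j, ω⟩ ⟨i', j', ω'⟩ h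
    have hi := Projectivization.apply_eq_zero_iff_of_mk_eq_mk h (Fin.castAdd 3 i)
    simp only [pairSingle, Fin.append_left, Pi.single_eq_same, Pi.single_apply] at hi
    obtain rfl : i = i' := by_contra fun hne => by simp [hne] at hi
    have h' := Projectivization.eq_of_mk_eq_mk_of_apply_eq_one h (k := Fin.castAdd 3 i)
      (by simp [pairSingle]) (by simp [pairSingle])
    have hj := congrFun h' (Fin.natAdd 3 j)
    simp only [pairSingle, Fin.append_right, Pi.single_eq_same, Pi.single_apply] at hj
    split_ifs at hj with hjj
    · rw [hjj, Subtype.ext hj]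
    · exact absurd hj ω.ne_zero
  · rintro ⟨α, β, γ, δ⟩ ⟨α', β', γ', δ'⟩ h
    have h' := Projectivization.eq_of_mk_eq_mk_of_apply_eq_one h (k := 0) rfl rfl
    simp only [ratioVec, Matrix.vecCons_inj] at h'
    obtain ⟨-, hα, hβ, hγ, hδ, -⟩ := h'
    rw [Subtype.ext hα, Subtype.ext hβ, Subtype.ext hγ, Subtype.ext hδ]
  · rintro ⟨i, j, ω⟩ ⟨α, β, γ, δ⟩ h
    have := (Projectivization.apply_eq_zero_iff_of_mk_eq_mk h (Fin.castAdd 3 (i + 1))).1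
      (by simp [pairSingle])
    exact ratioVec_apply_ne_zero α.ne_zero β.ne_zero γ.ne_zero δ.ne_zero _ this

lemma singularPoint_mem_singularLocus (y) : singularPoint y ∈ singularLocus := by
  rcases y with ⟨i, j, ω⟩ | ⟨α, β, γ, δ⟩
  · exact (mk_mem_singularLocus_iff _).2
      (isSingularVector_pairSingle i j (by rw [ω.pow_three, one_pow]))
  · exact (mk_mem_singularLocus_iff _).2
      (isSingularVector_ratioVec α.pow_three β.pow_three γ.pow_three δ.pow_three)

lemma mk_mem_range_singularPoint {v : Fin 6 → ℂ} (hv : v ≠ 0) (h : IsSingularVector v) :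
    Projectivization.mk ℂ v hv ∈ Set.range singularPoint := by
  obtain ⟨hf, hg, hgrad | ⟨t, ht⟩⟩ := (isSingularVector_iff v).1 h
  · obtain ⟨i, j, ω, hω, c, rfl⟩ := exists_smul_pairSingle_eq hv hgrad hg
    exact ⟨.inl ⟨i, j, .mk ω hω⟩, ((Projectivization.mk_eq_mk_iff' _ _ _ _ _).2 ⟨c, rfl⟩).symm⟩
  · obtain ⟨α, β, γ, δ, hα, hβ, hγ, hδ, c, rfl⟩ := exists_smul_ratioVec_eq hv hf ht
    exact ⟨.inr ⟨.mk α hα, .mk β hβ, .mk γ hγ, .mk δ hδ⟩,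
      ((Projectivization.mk_eq_mk_iff' _ _ _ _ _).2 ⟨c, rfl⟩).symm⟩

lemma singularLocus_eq_range : singularLocus = Set.range singularPoint := by
  refine Set.Subset.antisymm (fun x => ?_) (Set.range_subset_iff.2 singularPoint_mem_singularLocus)
  induction x using Projectivization.ind with
  | h v hv => exact fun hx => mk_mem_range_singularPoint hv ((mk_mem_singularLocus_iff hv).1 hx)

theorem singularLocus_card :
    singularLocus.Finite ∧ singularLocus.ncard = 108 := by
  rw [singularLocus_eq_range]
  refine ⟨Set.finite_range _, ?_⟩
  rw [Set.ncard_range_of_injective singularPoint_injective, Nat.card_eq_fintype_card]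
  simp [card_nthRootsFinset_three_one]
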